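/- The set of derivations of the Leibniz algebra L₁₂ is a linear subspace of End(V) of dimension 5; explicitly, a linear map d : V → V is a derivation of L₁₂ if and only if there exist complex numbers a, p, q, r, s such that d(e₁) = a·e₁ + p·e₃ + q·e₄, d(e₂) = a·e₂ + r·e₃ + s·e₄, d(e₃) = 2a·e₃, and d(e₄) = 2a·e₄. -/

import Mathlib

/-- `V = ℂ⁴`. -/
abbrev V : Type := Fin 4 → ℂ

/-- standard basis: `e 0 = e₁`, ..., `e 3 = e₄`. -/
def e (i : Fin 4) : V := Pi.single i 1

/-- Bracket of the Leibniz algebra `L₁₂`: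
`⟦e₁,e₂⟧ = e₃`, `⟦e₂,e₁⟧ = e₄`, `⟦e₂,e₂⟧ = -e₃`, all other basis products zero. -/
def br (x y : V) : V :=
  (x 0 * y 1 - x 1 * y 1) • e 2 + (x 1 * y 0) • e 3

/-- A derivation. -/
def IsDer (d : V →ₗ[ℂ] V) : Prop :=
  ∀ x y : V, d (br x y) = br (d x) y + br x (d y)

/-! Testing the derivation identity on the four products of `e₁, e₂` (which generate `L₁₂`)
forces `d(e₁)` and `d(e₂)` to have no `e₂`- resp. `e₁`-component, equal diagonal entries `a`,
and determines `d(e₃) = d⟦e₁,e₂⟧` and `d(e₄) = d⟦e₂,e₁⟧` as `2a·e₃` and `2a·e₄`. Conversely every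
map of this shape is a derivation, and the shape depends linearly and injectively on
`(a, p, q, r, s) ∈ ℂ⁵`, so the derivations form the image of `ℂ⁵` under an injective linear map. -/

lemma e_apply (i j : Fin 4) : e i j = if j = i then 1 else 0 := Pi.single_apply i 1 j

lemma linearMap_ext_e {d d' : V →ₗ[ℂ] V} (h : ∀ i, d (e i) = d' (e i)) : d = d' :=
  (Pi.basisFun ℂ (Fin 4)).ext fun i => by simpa [e] using h i

lemma br_e_zero_right (x : V) : br x (e 0) = x 1 • e 3 := by simp [br, e_apply]

lemma br_e_one_right (x : V) : br x (e 1) = (x 0 - x 1) • e 2 := by simp [br, e_apply]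

lemma br_e_zero_left (y : V) : br (e 0) y = y 1 • e 2 := by simp [br, e_apply]

lemma br_e_one_left (y : V) : br (e 1) y = y 0 • e 3 - y 1 • e 2 := by simp [br, e_apply, sub_eq_neg_add]

def HasDerivationForm (d : V →ₗ[ℂ] V) (a p q r s : ℂ) : Prop :=
  d (e 0) = a • e 0 + p • e 2 + q • e 3 ∧
  d (e 1) = a • e 1 + r • e 2 + s • e 3 ∧
  d (e 2) = (2 * a) • e 2 ∧
  d (e 3) = (2 * a) • e 3

def paramDerivation : (Fin 5 → ℂ) →ₗ[ℂ] V →ₗ[ℂ] V :=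
  LinearMap.mk₂ ℂ
    (fun c x => ![c 0 * x 0, c 0 * x 1,
      c 1 * x 0 + c 3 * x 1 + 2 * c 0 * x 2,
      c 2 * x 0 + c 4 * x 1 + 2 * c 0 * x 3])
    (by intros; funext i; fin_cases i <;> simp <;> ring)
    (by intros; funext i; fin_cases i <;> simp <;> ring)
    (by intros; funext i; fin_cases i <;> simp <;> ring)
    (by intros; funext i; fin_cases i <;> simp <;> ring)

lemma hasDerivationForm_paramDerivation (c : Fin 5 → ℂ) :
    HasDerivationForm (paramDerivation c) (c 0) (c 1) (c 2) (c 3) (c 4) := by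
  refine ⟨?_, ?_, ?_, ?_⟩ <;> funext i <;> fin_cases i <;> simp [paramDerivation, e_apply]

lemma HasDerivationForm.eq_paramDerivation {d : V →ₗ[ℂ] V} {a p q r s : ℂ}
    (hd : HasDerivationForm d a p q r s) : d = paramDerivation ![a, p, q, r, s] := by
  obtain ⟨h0, h1, h2, h3⟩ := hd
  obtain ⟨p0, p1, p2, p3⟩ := hasDerivationForm_paramDerivation ![a, p, q, r, s]
  refine linearMap_ext_e fun i => ?_
  fin_cases i <;> simp_all

lemma isDer_paramDerivation (c : Fin 5 → ℂ) : IsDer (paramDerivation c) := by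
  intro x y
  funext i
  fin_cases i <;> simp [paramDerivation, br, e_apply] <;> ring

lemma paramDerivation_injective : Function.Injective paramDerivation := by
  intro c c' h
  obtain ⟨h0, h1, -⟩ := hasDerivationForm_paramDerivation c
  obtain ⟨h0', h1', -⟩ := hasDerivationForm_paramDerivation c'
  rw [← h, h0] at h0'
  rw [← h, h1] at h1'
  funext j
  fin_cases j
  · simpa [e_apply] using congrFun h0' 0
  · simpa [e_apply] using congrFun h0' 2
  · simpa [e_apply] using congrFun h0' 3
  · simpa [e_apply] using congrFun h1' 2
  · simpa [e_apply] using congrFun h1' 3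

lemma IsDer.hasDerivationForm {d : V →ₗ[ℂ] V} (hd : IsDer d) :
    HasDerivationForm d (d (e 1) 1) (d (e 0) 2) (d (e 0) 3) (d (e 1) 2) (d (e 1) 3) := by
  unfold HasDerivationForm
  set x := d (e 0)
  set y := d (e 1)
  have h00 : x 1 • e 3 + x 1 • e 2 = 0 := by
    simpa [br_e_zero_right, br_e_zero_left, e_apply] using (hd (e 0) (e 0)).symm
  have h01 : d (e 2) = (x 0 - x 1) • e 2 + y 1 • e 2 := by
    simpa [br_e_one_right, br_e_zero_left, e_apply] using hd (e 0) (e 1)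
  have h10 : d (e 3) = y 1 • e 3 + (x 0 • e 3 - x 1 • e 2) := by
    simpa [br_e_zero_right, br_e_one_left, e_apply] using hd (e 1) (e 0)
  have h11 : -d (e 2) = (y 0 - y 1) • e 2 + (y 0 • e 3 - y 1 • e 2) := by
    simpa [br_e_one_right, br_e_one_left, e_apply] using hd (e 1) (e 1)
  have hx1 : x 1 = 0 := by simpa [e_apply] using congrFun h00 2
  have hy0 : y 0 = 0 := by simpa [h01, e_apply] using (congrFun h11 3).symm
  have hx0 : x 0 = y 1 := by simpa [h01, hx1, hy0, e_apply] using congrFun h11 2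
  refine ⟨?_, ?_, ?_, ?_⟩
  · funext k; fin_cases k <;> simp [hx0, hx1, e_apply]
  · funext k; fin_cases k <;> simp [hy0, e_apply]
  · rw [h01, hx1, hx0]; module
  · rw [h10, hx1, hx0]; module

lemma isDer_iff_exists_hasDerivationForm (d : V →ₗ[ℂ] V) :
    IsDer d ↔ ∃ a p q r s : ℂ, HasDerivationForm d a p q r s :=
  ⟨fun hd => ⟨_, _, _, _, _, hd.hasDerivationForm⟩,
    fun ⟨_, _, _, _, _, hd⟩ => hd.eq_paramDerivation ▸ isDer_paramDerivation _⟩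

lemma isDer_iff_mem_range (d : V →ₗ[ℂ] V) : IsDer d ↔ d ∈ LinearMap.range paramDerivation :=
  ⟨fun hd => ⟨_, hd.hasDerivationForm.eq_paramDerivation.symm⟩,
    fun ⟨c, hc⟩ => hc ▸ isDer_paramDerivation c⟩

theorem derivations_of_L12 :
    (∃ S : Submodule ℂ (V →ₗ[ℂ] V),
      (S : Set (V →ₗ[ℂ] V)) = {d | IsDer d} ∧ Module.finrank ℂ S = 5) ∧
    (∀ d : V →ₗ[ℂ] V, IsDer d ↔ ∃ a p q r s : ℂ,
      d (e 0) = a • e 0 + p • e 2 + q • e 3 ∧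
      d (e 1) = a • e 1 + r • e 2 + s • e 3 ∧
      d (e 2) = (2 * a) • e 2 ∧
      d (e 3) = (2 * a) • e 3) := by
  refine ⟨⟨LinearMap.range paramDerivation, ?_, ?_⟩, isDer_iff_exists_hasDerivationForm⟩
  · exact Set.ext fun d => (isDer_iff_mem_range d).symm
  · rw [LinearMap.finrank_range_of_inj paramDerivation_injective, Module.finrank_fin_fun]
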